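/- Every ordered field F in which every nonempty bounded subset definable with parameters (in the language of ordered fields) has a least upper bound is a real closed field; in particular, every nonnegative element of F has a square root in F, and every odd-degree polynomial over F has a root in F. -/

import Mathlib

open FirstOrder

/-- The language of ordered fields: the language of rings together with the order relation. -/
def orderedFieldLang : FirstOrder.Language := Language.ring.sum Language.order

/-- The natural interpretation of the language of ordered fields in a linear ordered field. -/
noncomputable def orderedFieldStructure (F : Type*) [Field F] [LinearOrder F] [IsStrictOrderedRing F] :
    orderedFieldLang.Structure F :=
  letI : Language.ring.Structure F := (Ring.compatibleRingOfRing F).toStructure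
  letI : Language.order.Structure F := Language.orderStructure F
  inferInstanceAs ((Language.ring.sum Language.order).Structure F)

/-!
The supremum `u` of the definable set `{x | p x ≤ 0}` is a root of the polynomial `p`: with
respect to the order topology `p` is continuous, so `p u < 0` would put points above `u` into the
set, while `p u > 0` would make some point below `u` an upper bound. Such a supremum exists as
soon as `p` takes a nonpositive value and is eventually positive. For `X ^ 2 - C x` with `0 ≤ x`
this is clear; a polynomial with positive leading coefficient is positive near `+∞` because
`p y = y ^ n * (reverse p) (y⁻¹)` for `y > 0` and `(reverse p) 0` is the leading coefficient,
and if its degree is odd, it is negative near `-∞` by the same argument applied to `-p (-X)`.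
-/

open Filter Topology Polynomial Language

theorem Continuous.eq_zero_of_isLUB_setOf_le_zero {α β : Type*} [LinearOrder α]
    [TopologicalSpace α] [OrderTopology α] [DenselyOrdered α] [NoMaxOrder α] [LinearOrder β]
    [TopologicalSpace β] [OrderClosedTopology β] [Zero β] {f : α → β} (hf : Continuous f)
    {u : α} (hu : IsLUB {x | f x ≤ 0} u) (hne : {x | f x ≤ 0}.Nonempty) : f u = 0 := by
  have hle : u ∈ {x | f x ≤ 0} := IsClosed.isLUB_mem hu hne (isClosed_le hf continuous_const)
  refine hle.antisymm (not_lt.1 fun hlt => ?_)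
  have hright : ∀ᶠ y in 𝓝[>] u, u < y ∧ f y < 0 :=
    eventually_mem_nhdsWithin.and
      (nhdsWithin_le_nhds ((isOpen_lt hf continuous_const).mem_nhds hlt))
  obtain ⟨y, hyu, hy⟩ := hright.exists
  exact (hu.1 hy.le).not_gt hyu

namespace Polynomial

variable {F : Type*} [Field F] [LinearOrder F] [IsStrictOrderedRing F]

theorem isRoot_of_isLUB_setOf_eval_nonpos {p : F[X]} {u : F}
    (hu : IsLUB {x | p.eval x ≤ 0} u) (hne : {x | p.eval x ≤ 0}.Nonempty) : p.IsRoot u := by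
  let := Preorder.topology F
  have : OrderTopology F := ⟨rfl⟩
  exact p.continuous.eq_zero_of_isLUB_setOf_le_zero hu hne

theorem eventually_atTop_eval_pos {p : F[X]} (hp : 0 < p.leadingCoeff) :
    ∀ᶠ y in atTop, 0 < p.eval y := by
  let := Preorder.topology F
  have : OrderTopology F := ⟨rfl⟩
  have hrev : ∀ᶠ z in 𝓝 0, 0 < p.reverse.eval z :=
    p.reverse.continuous.tendsto 0 |>.eventually
      (lt_mem_nhds (by simpa [← coeff_zero_eq_eval_zero] using hp))
  filter_upwards [tendsto_inv_atTop_zero.eventually hrev, eventually_gt_atTop 0] with y hy hy0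
  let := invertibleOfNonzero hy0.ne'
  have hreverse := eval₂_reverse_mul_pow (RingHom.id F) y p
  rw [eval₂_id, eval₂_id, invOf_eq_inv] at hreverse
  exact hreverse ▸ mul_pos hy (pow_pos hy0 _)

theorem eventually_atBot_eval_neg {p : F[X]} (hodd : Odd p.natDegree)
    (hp : 0 < p.leadingCoeff) : ∀ᶠ y in atBot, p.eval y < 0 := by
  have h : 0 < (-p.comp (-X)).leadingCoeff := by simpa [hodd.neg_one_pow] using hp
  filter_upwards [tendsto_neg_atBot_atTop.eventually (eventually_atTop_eval_pos h)] with y hy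
  simpa using hy

end Polynomial

namespace FirstOrder.Ring

variable {R : Type*} [CommRing R] [CompatibleRing R]

theorem exists_term_realize_eq_eval (p : R[X]) :
    ∃ t : Language.ring.Term ((Set.univ : Set R) ⊕ Fin 1),
      ∀ v : Fin 1 → R, t.realize (Sum.elim (↑) v) = p.eval (v 0) := by
  induction p using Polynomial.induction_on with
  | C a => exact ⟨Term.var (Sum.inl ⟨a, trivial⟩), fun v => by simp⟩
  | add p q hp hq =>
    obtain ⟨tp, htp⟩ := hp
    obtain ⟨tq, htq⟩ := hq
    exact ⟨tp + tq, fun v => by simp [htp, htq]⟩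
  | monomial n a h =>
    obtain ⟨t, ht⟩ := h
    exact ⟨t * Term.var (Sum.inr 0), fun v => by simp [ht, pow_succ, mul_assoc]⟩

theorem definable_setOf_eval_nonpos [LinearOrder R] [Language.order.Structure R]
    [Language.order.OrderedStructure R] (p : R[X]) :
    Set.Definable₁ (Set.univ : Set R) (Language.ring.sum Language.order) {x | p.eval x ≤ 0} := by
  have : (Language.ring.sum Language.order).OrderedStructure R :=
    ⟨relMap_leSymb (L := Language.order)⟩
  obtain ⟨t, ht⟩ := exists_term_realize_eq_eval p
  rw [Set.Definable₁, Set.definable_iff_exists_formula_sum]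
  refine ⟨((LHom.sumInl.onTerm t).relabel Sum.inl).le (LHom.sumInl.onTerm 0), ?_⟩
  ext v
  simp [Formula.Realize, ht]

end FirstOrder.Ring

theorem orderedFieldLang.definable_setOf_eval_nonpos {F : Type*} [Field F] [LinearOrder F]
    [IsStrictOrderedRing F] (p : F[X]) :
    letI := orderedFieldStructure F
    Set.Definable₁ (Set.univ : Set F) orderedFieldLang {x | p.eval x ≤ 0} := by
  let := Ring.compatibleRingOfRing F
  let : Language.order.Structure F := Language.orderStructure F
  have : Language.order.OrderedStructure F := ⟨fun _ => Iff.rfl⟩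
  exact Ring.definable_setOf_eval_nonpos p

/-- An ordered field in which every nonempty bounded-above subset definable with
parameters in the language of ordered fields has a least upper bound is real closed:
every nonnegative element has a square root and every polynomial of odd degree has a
root. -/
theorem definable_sup_implies_real_closed (F : Type*) [Field F] [LinearOrder F] [IsStrictOrderedRing F]
    (hsup : ∀ s : Set F,
      (letI := orderedFieldStructure F
       Set.Definable₁ (Set.univ : Set F) orderedFieldLang s) →
      s.Nonempty → BddAbove s → ∃ u : F, IsLUB s u) :
    (∀ x : F, 0 ≤ x → ∃ y : F, y ^ 2 = x) ∧
    (∀ p : Polynomial F, Odd p.natDegree → ∃ x : F, p.IsRoot x) := by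
  have exists_root : ∀ p : F[X], (∃ a, p.eval a ≤ 0) → (∀ᶠ y in atTop, 0 < p.eval y) →
      ∃ x, p.IsRoot x := by
    rintro p hne hpos
    obtain ⟨b, hb⟩ := hpos.exists_forall_of_atTop
    have hbdd : BddAbove {x | p.eval x ≤ 0} :=
      ⟨b, fun x hx => not_lt.1 fun hbx => (hb x hbx.le).not_ge hx⟩
    obtain ⟨u, hu⟩ := hsup _ (orderedFieldLang.definable_setOf_eval_nonpos p) hne hbdd
    exact ⟨u, isRoot_of_isLUB_setOf_eval_nonpos hu hne⟩
  refine ⟨fun x hx => ?_, fun p hodd => ?_⟩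
  · obtain ⟨y, hy⟩ := exists_root (X ^ 2 - C x) ⟨0, by simpa using hx⟩
      (eventually_atTop_eval_pos (by simp [leadingCoeff_X_pow_sub_C]))
    exact ⟨y, by simpa [sub_eq_zero] using hy⟩
  wlog hlc : 0 < p.leadingCoeff generalizing p
  · have hp : p ≠ 0 := by rintro rfl; simp at hodd
    obtain ⟨x, hx⟩ := this (-p) (by rwa [natDegree_neg]) (by
      simpa using (leadingCoeff_ne_zero.2 hp).lt_of_le (not_lt.1 hlc))
    exact ⟨x, by simpa using hx⟩
  obtain ⟨a, ha⟩ := (eventually_atBot_eval_neg hodd hlc).exists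
  exact exists_root p ⟨a, ha.le⟩ (eventually_atTop_eval_pos hlc)
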